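/- Fix an integer r ≥ 1 and an integer ν with 0 ≤ ν ≤ 2r−2. Then ∫_Ω Θ_n(t)^{2r} dt ≍ n^{6r−2} (two-sided bounds with constants depending only on r), and there exists a constant c > 0 depending only on r and ν such that for all n ≥ 1, ∫_Ω ‖t‖^ν·K_{n,r}(t) dt ≤ c·n^{−ν}, where K_{n,r}(t) := Θ_n(t)^{2r} / ∫_Ω Θ_n(s)^{2r} ds is the normalized Jackson-type kernel. -/

import Mathlib

/-!
Write `N = n + 1` and `d₁ = t₁ - t₂`, `d₂ = t₂ - t₃`, `d₃ = t₁ - t₃`. Then `Θ_n` is the product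
of the three ratios `sin (N π d / 3) / sin (π d / 3)`, each bounded by `N` and, on `Ω` (where
`|dᵢ| ≤ 2`), by `6 N / (1 + N |d|)`. Since `‖t‖ ≤ |d₁| + |d₂| ≤ (1 + N |d₁|) (1 + N |d₂|) / N`,
the integrand `‖t‖^ν Θ_n^{2r}` is at most a constant times `N^{6r-ν} w (N d₁) w (N d₂)` with
`w y = (1 + |y|)^{-(2r-ν)}`, which is integrable on `ℝ` because `2r - ν ≥ 2`; the change of
variables `t ↦ (N d₁, N d₂)` has Jacobian `3 N²`, so the integral is `O(N^{6r-2-ν})`.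
Conversely, on a box of area `1 / (16 N²)` on which every `N dᵢ` lies in `(0, 3/2)`, each ratio
is at least `2N/π`, so `∫_Ω Θ_n^{2r} ≳ N^{6r-2}`. The kernel moment bound is the quotient of the
two estimates.
-/

noncomputable section

open MeasureTheory Filter

/-- The (half-open) regular hexagon `Ω` in the coordinates `(t₁,t₂)` (with `t₃ = -(t₁+t₂)`). -/
def Hex : Set (ℝ × ℝ) :=
  {t | -1 ≤ t.1 ∧ t.1 < 1 ∧ -1 ≤ t.2 ∧ t.2 < 1 ∧ -1 ≤ t.1 + t.2 ∧ t.1 + t.2 < 1}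

/-- Third homogeneous coordinate: `t₃ = -(t₁+t₂)`. -/
def t3 (t : ℝ × ℝ) : ℝ := -(t.1 + t.2)

/-- The function `Θ_n`. -/
def Theta (n : ℕ) (t : ℝ × ℝ) : ℝ :=
  (Real.sin ((n+1) * Real.pi * (t.1 - t.2) / 3) *
   Real.sin ((n+1) * Real.pi * (t.2 - t3 t) / 3) *
   Real.sin ((n+1) * Real.pi * (t3 t - t.1) / 3)) /
  (Real.sin (Real.pi * (t.1 - t.2) / 3) *
   Real.sin (Real.pi * (t.2 - t3 t) / 3) *
   Real.sin (Real.pi * (t3 t - t.1) / 3))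

/-- The normalized Jackson-type kernel `K_{n,r} = Θ_n^{2r} / ∫_Ω Θ_n^{2r}`. -/
def JacksonKer (n r : ℕ) (t : ℝ × ℝ) : ℝ :=
  Theta n t ^ (2 * r) / ∫ s in Hex, Theta n s ^ (2 * r)

namespace HexJackson

open Real Set

def sinRatio (a u : ℝ) : ℝ := sin (a * u) / sin u

lemma sinRatio_neg (a u : ℝ) : sinRatio a (-u) = sinRatio a u := by
  simp only [sinRatio, mul_neg, sin_neg, neg_div_neg_eq]

lemma abs_sin_nat_mul_le (k : ℕ) (x : ℝ) : |sin (k * x)| ≤ k * |sin x| := by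
  induction k with
  | zero => simp
  | succ k ih =>
    push_cast
    calc |sin ((k + 1) * x)| = |sin (k * x) * cos x + cos (k * x) * sin x| := by
          rw [add_mul, one_mul, sin_add]
      _ ≤ |sin (k * x)| * |cos x| + |cos (k * x)| * |sin x| := by
          rw [← abs_mul, ← abs_mul]; exact abs_add_le _ _
      _ ≤ k * |sin x| * 1 + 1 * |sin x| := by
          gcongr
          exacts [abs_cos_le_one _, abs_cos_le_one _]
      _ = (k + 1) * |sin x| := by ring

lemma abs_sinRatio_natCast_le (k : ℕ) (u : ℝ) : |sinRatio k u| ≤ k := by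
  rw [sinRatio, abs_div]
  rcases eq_or_ne (sin u) 0 with h | h
  · simp [h]
  · exact div_le_of_le_mul₀ (abs_nonneg _) k.cast_nonneg (abs_sin_nat_mul_le k u)

lemma abs_le_three_mul_abs_sin {u : ℝ} (hu : |u| ≤ 2 * π / 3) : |u| ≤ 3 * |sin u| := by
  wlog h0 : 0 ≤ u generalizing u
  · simpa [abs_neg] using this (u := -u) (by rwa [abs_neg]) (by linarith)
  rw [abs_of_nonneg h0] at hu ⊢
  rw [abs_of_nonneg (sin_nonneg_of_nonneg_of_le_pi h0 (by linarith [pi_pos]))]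
  rcases le_total u (π / 2) with h | h
  · have h2π : 1 / 3 ≤ 2 / π := by
      rw [div_le_div_iff₀ (by norm_num) pi_pos]; linarith [pi_lt_four]
    nlinarith [mul_le_sin h0 h, mul_le_mul_of_nonneg_right h2π h0]
  · -- on `[π/2, 2π/3]`, `sin u ≥ sin (π/3) = √3/2 > 2π/9 ≥ u/3`
    have hsin : sin (π / 3) ≤ sin u := by
      rw [← sin_pi_sub u]
      exact sin_le_sin_of_le_of_le_pi_div_two (by linarith [pi_pos]) (by linarith) (by linarith)
    rw [sin_pi_div_three] at hsin
    nlinarith [Real.sq_sqrt (show (0:ℝ) ≤ 3 by norm_num), Real.sqrt_nonneg 3, pi_lt_d2]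

lemma abs_sinRatio_le_div {u : ℝ} (hu : |u| ≤ 2 * π / 3) (a : ℝ) :
    |sinRatio a u| ≤ 3 / |u| := by
  rcases eq_or_ne u 0 with rfl | h0
  · simp [sinRatio]
  have hu0 : 0 < |u| := abs_pos.2 h0
  have hsin : 0 < |sin u| := by nlinarith [abs_le_three_mul_abs_sin hu]
  rw [sinRatio, abs_div, div_le_div_iff₀ hsin hu0]
  nlinarith [abs_le_three_mul_abs_sin hu, abs_sin_le_one (a * u)]

lemma abs_sinRatio_le {u : ℝ} (hu : |u| ≤ 2 * π / 3) (k : ℕ) :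
    |sinRatio k u| ≤ 6 * k / (1 + k * |u|) := by
  have hk := abs_sinRatio_natCast_le k u
  have hdiv := abs_sinRatio_le_div hu k
  rw [le_div_iff₀ (by positivity)]
  rcases le_total (k * |u|) 1 with h | h
  · nlinarith [abs_nonneg (sinRatio k u)]
  · have hu0 : 0 < |u| := by
      by_contra! h'
      nlinarith [abs_nonneg u, k.cast_nonneg (α := ℝ)]
    rw [le_div_iff₀ hu0] at hdiv
    nlinarith [abs_nonneg (sinRatio k u)]

lemma le_sinRatio {a u : ℝ} (hu : 0 < u) (ha : 1 ≤ a) (hau : a * u ≤ π / 2) :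
    2 * a / π ≤ sinRatio a u := by
  have hsin : 0 < sin u := sin_pos_of_pos_of_lt_pi hu (by nlinarith [pi_pos])
  rw [sinRatio, le_div_iff₀ hsin]
  calc 2 * a / π * sin u ≤ 2 / π * (a * u) := by
        rw [div_mul_eq_mul_div, div_mul_eq_mul_div, div_le_div_iff_of_pos_right pi_pos]
        nlinarith [sin_le hu.le]
    _ ≤ sin (a * u) := mul_le_sin (by positivity) hau

lemma abs_sinRatio_pi_mul_div_three_le {d : ℝ} (hd : |d| ≤ 2) (k : ℕ) :
    |sinRatio k (π * d / 3)| ≤ 6 * k / (1 + k * |d|) := by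
  have habs : |π * d / 3| = π / 3 * |d| := by
    rw [abs_div, abs_mul, abs_of_pos pi_pos, abs_of_pos (show (0:ℝ) < 3 by norm_num)]; ring
  have hu : |π * d / 3| ≤ 2 * π / 3 := by rw [habs]; nlinarith [pi_pos]
  refine (abs_sinRatio_le hu k).trans ?_
  rw [habs]
  gcongr
  nlinarith [pi_gt_three, abs_nonneg d]

lemma two_mul_div_pi_le_sinRatio {a d : ℝ} (hd : 0 < d) (ha : 1 ≤ a) (had : a * d ≤ 3 / 2) :
    2 * a / π ≤ sinRatio a (π * d / 3) :=
  le_sinRatio (by positivity) ha (by nlinarith [pi_pos])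

lemma Theta_eq (n : ℕ) (t : ℝ × ℝ) :
    Theta n t = sinRatio (n + 1) (π * (t.1 - t.2) / 3) *
      sinRatio (n + 1) (π * (t.1 + 2 * t.2) / 3) * sinRatio (n + 1) (π * (2 * t.1 + t.2) / 3) := by
  have h (x : ℝ) :
      sin ((n + 1) * π * x / 3) / sin (π * x / 3) = sinRatio (n + 1) (π * x / 3) := by
    rw [sinRatio]; ring_nf
  rw [Theta, mul_div_mul_comm, mul_div_mul_comm, h, h, h,
    ← sinRatio_neg _ (π * (2 * t.1 + t.2) / 3)]
  simp only [t3]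
  ring_nf

lemma abs_Theta_le (n : ℕ) (t : ℝ × ℝ) : |Theta n t| ≤ (n + 1) ^ 3 := by
  have h (u : ℝ) : |sinRatio (n + 1) u| ≤ n + 1 := by
    simpa using abs_sinRatio_natCast_le (n + 1) u
  rw [Theta_eq, abs_mul, abs_mul, pow_three, ← mul_assoc]
  gcongr <;> exact h _

lemma abs_Theta_le_of_mem_Hex (n : ℕ) {t : ℝ × ℝ} (ht : t ∈ Hex) :
    |Theta n t| ≤ 36 * (n + 1) ^ 3 /
      ((1 + (n + 1) * |t.1 - t.2|) * (1 + (n + 1) * |t.1 + 2 * t.2|)) := by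
  obtain ⟨h1, h2, h3, h4, h5, h6⟩ := ht
  have h (d : ℝ) (hd : |d| ≤ 2) :
      |sinRatio (n + 1) (π * d / 3)| ≤ 6 * (n + 1) / (1 + (n + 1) * |d|) := by
    simpa using abs_sinRatio_pi_mul_div_three_le hd (n + 1)
  have hd1 := h (t.1 - t.2) (abs_le.2 ⟨by linarith, by linarith⟩)
  have hd2 := h (t.1 + 2 * t.2) (abs_le.2 ⟨by linarith, by linarith⟩)
  have hd3 : |sinRatio (n + 1) (π * (2 * t.1 + t.2) / 3)| ≤ n + 1 := by
    simpa using abs_sinRatio_natCast_le (n + 1) (π * (2 * t.1 + t.2) / 3)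
  rw [Theta_eq, abs_mul, abs_mul]
  calc _ ≤ 6 * (n + 1) / (1 + (n + 1) * |t.1 - t.2|) *
        (6 * (n + 1) / (1 + (n + 1) * |t.1 + 2 * t.2|)) * (n + 1) := by gcongr
    _ = _ := by field_simp; ring

lemma two_mul_div_pi_pow_three_le_Theta (n : ℕ) {t : ℝ × ℝ}
    (ht : t ∈ Ioo (1 / (4 * ((n : ℝ) + 1))) (1 / (2 * (n + 1))) ×ˢ
      Ioo 0 (1 / (4 * ((n : ℝ) + 1)))) :
    (2 * (n + 1) / π) ^ 3 ≤ Theta n t := by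
  obtain ⟨⟨h1, h2⟩, h3, h4⟩ := ht
  have hN : (1 : ℝ) ≤ n + 1 := by linarith [n.cast_nonneg (α := ℝ)]
  rw [div_lt_iff₀ (by positivity)] at h1
  rw [lt_div_iff₀ (by positivity)] at h2 h4
  have hd1 := two_mul_div_pi_le_sinRatio (d := t.1 - t.2) (by nlinarith) hN (by nlinarith)
  have hd2 := two_mul_div_pi_le_sinRatio (d := t.1 + 2 * t.2) (by nlinarith) hN (by nlinarith)
  have hd3 := two_mul_div_pi_le_sinRatio (d := 2 * t.1 + t.2) (by nlinarith) hN (by nlinarith)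
  have h0 : 0 ≤ 2 * ((n : ℝ) + 1) / π := by positivity
  rw [Theta_eq, pow_three, ← mul_assoc]
  exact mul_le_mul (mul_le_mul hd1 hd2 h0 (h0.trans hd1)) hd3 h0
    (mul_nonneg (h0.trans hd1) (h0.trans hd2))

lemma measurableSet_Hex : MeasurableSet Hex := by
  unfold Hex; measurability

lemma measurable_Theta (n : ℕ) : Measurable (Theta n) := by
  unfold Theta t3; fun_prop

lemma volume_Hex_ne_top : volume Hex ≠ ⊤ := by
  refine ((Metric.isBounded_Icc (-1 : ℝ × ℝ) 1).subset ?_).measure_lt_top.ne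
  rintro t ⟨h1, h2, h3, h4, -, -⟩
  exact ⟨⟨h1, h3⟩, ⟨h2.le, h4.le⟩⟩

lemma integrableOn_Theta_pow (n r : ℕ) :
    IntegrableOn (fun t => Theta n t ^ (2 * r)) Hex := by
  refine Measure.integrableOn_of_bounded (M := ((n + 1) ^ 3) ^ (2 * r)) volume_Hex_ne_top
    ((measurable_Theta n).pow_const _).aestronglyMeasurable (Eventually.of_forall fun t => ?_)
  rw [norm_pow, Real.norm_eq_abs]
  exact pow_le_pow_left₀ (abs_nonneg _) (abs_Theta_le n t) _

lemma le_integral_Theta_pow (n : ℕ) {r : ℕ} (hr : 1 ≤ r) :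
    (2 / π) ^ (6 * r) / 16 * ((n : ℝ) + 1) ^ (6 * r - 2) ≤ ∫ t in Hex, Theta n t ^ (2 * r) := by
  set N : ℝ := n + 1
  have hN0 : 0 < N := by positivity
  set B := Ioo (1 / (4 * N)) (1 / (2 * N)) ×ˢ Ioo 0 (1 / (4 * N))
  have hBHex : B ⊆ Hex := by
    have h4 : 1 / (4 * N) ≤ 1 / 4 := by gcongr; linarith [n.cast_nonneg (α := ℝ)]
    have h2 : 1 / (2 * N) ≤ 1 / 2 := by gcongr; linarith [n.cast_nonneg (α := ℝ)]
    rintro t ⟨⟨h1, h2'⟩, h3, h4'⟩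
    have : 0 < 1 / (4 * N) := by positivity
    exact ⟨by linarith, by linarith, by linarith, by linarith, by linarith, by linarith⟩
  have hvol : volume.real B = 1 / (16 * N ^ 2) := by
    rw [Measure.volume_eq_prod, measureReal_prod_prod, volume_real_Ioo_of_le,
      volume_real_Ioo_of_le]
    · field_simp; ring
    all_goals first | positivity | (gcongr; norm_num)
  have hpt : ∀ t ∈ B, (2 * N / π) ^ (6 * r) ≤ Theta n t ^ (2 * r) := fun t ht => by
    rw [show 6 * r = 3 * (2 * r) by ring, pow_mul]
    exact pow_le_pow_left₀ (by positivity) (two_mul_div_pi_pow_three_le_Theta n ht) _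
  calc (2 / π) ^ (6 * r) / 16 * N ^ (6 * r - 2) = (2 * N / π) ^ (6 * r) * volume.real B := by
        rw [hvol, pow_sub₀ _ hN0.ne' (by omega), div_pow, div_pow, mul_pow]
        field_simp
    _ ≤ ∫ t in B, Theta n t ^ (2 * r) :=
        setIntegral_ge_of_const_le_real (measurableSet_Ioo.prod measurableSet_Ioo)
          (measure_ne_top_of_subset hBHex volume_Hex_ne_top) hpt
          ((integrableOn_Theta_pow n r).mono_set hBHex)
    _ ≤ ∫ t in Hex, Theta n t ^ (2 * r) :=
        setIntegral_mono_set (integrableOn_Theta_pow n r)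
          (Eventually.of_forall fun t => Even.pow_nonneg (even_two_mul r) _) hBHex.eventuallyLE

/-- `(t₁ - t₂, t₂ - t₃)` in the coordinates `(t₁, t₂)`. -/
def rootCoords : (ℝ × ℝ) →ₗ[ℝ] ℝ × ℝ where
  toFun t := (t.1 - t.2, t.1 + 2 * t.2)
  map_add' x y := by ext <;> simp <;> ring
  map_smul' c x := by ext <;> simp <;> ring

lemma det_rootCoords : LinearMap.det rootCoords = 3 := by
  rw [← LinearMap.det_toMatrix (Module.Basis.finTwoProd ℝ), Matrix.det_fin_two]
  simp [LinearMap.toMatrix_apply, rootCoords]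
  norm_num

lemma map_rootCoords_volume :
    Measure.map rootCoords volume = ENNReal.ofReal 3⁻¹ • (volume : Measure (ℝ × ℝ)) := by
  have := Measure.map_linearMap_addHaar_eq_smul_addHaar (volume : Measure (ℝ × ℝ))
    (f := rootCoords) (by rw [det_rootCoords]; norm_num)
  rwa [det_rootCoords, abs_of_pos (by norm_num : (0 : ℝ) < 3⁻¹)] at this

lemma integrable_comp_rootCoords {F : ℝ × ℝ → ℝ} (hF : Integrable F) :
    Integrable (fun t => F (rootCoords t)) := by
  have : Integrable F (Measure.map rootCoords volume) := by
    rw [map_rootCoords_volume]; exact hF.smul_measure ENNReal.ofReal_ne_top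
  exact (integrable_map_measure this.aestronglyMeasurable (by fun_prop)).1 this

lemma integral_comp_rootCoords {F : ℝ × ℝ → ℝ} (hF : AEStronglyMeasurable F) :
    ∫ t, F (rootCoords t) = 3⁻¹ * ∫ y, F y := by
  rw [← integral_map (by fun_prop) (by rw [map_rootCoords_volume]; exact hF.smul_measure _),
    map_rootCoords_volume, integral_smul_measure, ENNReal.toReal_ofReal (by norm_num), smul_eq_mul]

lemma integrable_mul_comp_mul_left_prod {f g : ℝ → ℝ} (hf : Integrable f) (hg : Integrable g)
    {c : ℝ} (hc : c ≠ 0) : Integrable (fun y : ℝ × ℝ => f (c * y.1) * g (c * y.2)) := by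
  rw [Measure.volume_eq_prod]; exact (hf.comp_mul_left' hc).mul_prod (hg.comp_mul_left' hc)

lemma integrable_mul_comp_rootCoords {f g : ℝ → ℝ} (hf : Integrable f) (hg : Integrable g)
    {c : ℝ} (hc : c ≠ 0) :
    Integrable (fun t : ℝ × ℝ => f (c * (t.1 - t.2)) * g (c * (t.1 + 2 * t.2))) :=
  integrable_comp_rootCoords (integrable_mul_comp_mul_left_prod hf hg hc)

lemma integral_mul_comp_rootCoords {f g : ℝ → ℝ} (hf : Integrable f) (hg : Integrable g)
    {c : ℝ} (hc : 0 < c) :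
    ∫ t : ℝ × ℝ, f (c * (t.1 - t.2)) * g (c * (t.1 + 2 * t.2)) =
      (∫ x, f x) * (∫ x, g x) / (3 * c ^ 2) := by
  calc ∫ t : ℝ × ℝ, f (c * (t.1 - t.2)) * g (c * (t.1 + 2 * t.2))
      = 3⁻¹ * ∫ y : ℝ × ℝ, f (c * y.1) * g (c * y.2) :=
        integral_comp_rootCoords (F := fun y => f (c * y.1) * g (c * y.2))
          (integrable_mul_comp_mul_left_prod hf hg hc.ne').aestronglyMeasurable
    _ = (∫ x, f x) * (∫ x, g x) / (3 * c ^ 2) := by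
        rw [Measure.volume_eq_prod, integral_prod_mul (fun x => f (c * x)) (fun x => g (c * x)),
          Measure.integral_comp_mul_left, Measure.integral_comp_mul_left, abs_of_pos (inv_pos.2 hc)]
        simp only [smul_eq_mul]
        field_simp

lemma integrable_inv_one_add_abs_pow {a : ℕ} (ha : 2 ≤ a) :
    Integrable fun y : ℝ => ((1 + |y|) ^ a)⁻¹ := by
  have := integrable_one_add_norm (E := ℝ) (μ := volume) (r := a) (by simp; exact_mod_cast ha)
  refine this.congr (Eventually.of_forall fun y => ?_)
  simp [Real.rpow_neg (by positivity : (0:ℝ) ≤ 1 + |y|)]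

lemma integral_inv_one_add_abs_pow_pos {a : ℕ} (ha : 2 ≤ a) :
    0 < ∫ y : ℝ, ((1 + |y|) ^ a)⁻¹ := by
  rw [integral_pos_iff_support_of_nonneg (fun y => by positivity)
    (integrable_inv_one_add_abs_pow ha)]
  simp [Function.support, fun y : ℝ => (by positivity : (0:ℝ) < 1 + |y|).ne']

lemma sqrt_sq_add_sq_le (t : ℝ × ℝ) :
    √(t.1 ^ 2 + t.2 ^ 2) ≤ |t.1 - t.2| + |t.1 + 2 * t.2| := by
  have hmul : (t.1 - t.2) * (t.1 + 2 * t.2) ≤ |t.1 - t.2| * |t.1 + 2 * t.2| :=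
    abs_mul (t.1 - t.2) (t.1 + 2 * t.2) ▸ le_abs_self _
  refine Real.sqrt_le_iff.2 ⟨by positivity, ?_⟩
  nlinarith [sq_abs (t.1 - t.2), sq_abs (t.1 + 2 * t.2), abs_nonneg (t.1 - t.2),
    abs_nonneg (t.1 + 2 * t.2)]

lemma sqrt_pow_mul_Theta_pow_le (n : ℕ) {r ν : ℕ} (hν : ν ≤ 2 * r) {t : ℝ × ℝ} (ht : t ∈ Hex) :
    √(t.1 ^ 2 + t.2 ^ 2) ^ ν * Theta n t ^ (2 * r) ≤
      36 ^ (2 * r) * ((n : ℝ) + 1) ^ (6 * r) / ((n : ℝ) + 1) ^ ν *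
        (((1 + |(n + 1) * (t.1 - t.2)|) ^ (2 * r - ν))⁻¹ *
          ((1 + |(n + 1) * (t.1 + 2 * t.2)|) ^ (2 * r - ν))⁻¹) := by
  set N : ℝ := n + 1
  have hN : 0 < N := by positivity
  rw [abs_mul, abs_mul, abs_of_pos hN]
  set A := 1 + N * |t.1 - t.2|
  set B := 1 + N * |t.1 + 2 * t.2|
  have hA : 1 ≤ A := by simp only [A]; nlinarith [abs_nonneg (t.1 - t.2)]
  have hB : 1 ≤ B := by simp only [B]; nlinarith [abs_nonneg (t.1 + 2 * t.2)]
  have hsqrt : √(t.1 ^ 2 + t.2 ^ 2) ≤ A * B / N := by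
    rw [le_div_iff₀ hN]
    nlinarith [sqrt_sq_add_sq_le t, mul_nonneg (mul_nonneg hN.le (abs_nonneg (t.1 - t.2)))
      (mul_nonneg hN.le (abs_nonneg (t.1 + 2 * t.2)))]
  have hΘ : |Theta n t| ≤ 36 * N ^ 3 / (A * B) := abs_Theta_le_of_mem_Hex n ht
  obtain ⟨a, ha⟩ := Nat.exists_eq_add_of_le hν
  calc √(t.1 ^ 2 + t.2 ^ 2) ^ ν * Theta n t ^ (2 * r)
      = √(t.1 ^ 2 + t.2 ^ 2) ^ ν * |Theta n t| ^ (2 * r) := by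
        rw [(even_two_mul r).pow_abs]
    _ ≤ (A * B / N) ^ ν * (36 * N ^ 3 / (A * B)) ^ (2 * r) := by gcongr
    _ = _ := by
        rw [show 6 * r = 3 * (2 * r) by ring, ha, Nat.add_sub_cancel_left]
        simp only [div_pow, mul_pow, ← pow_mul, pow_add]
        field_simp
        ring

lemma exists_integral_Hex_sqrt_pow_mul_Theta_pow_le {r ν : ℕ} (h : ν + 2 ≤ 2 * r) :
    ∃ C, 0 < C ∧ ∀ n : ℕ, ∫ t in Hex, √(t.1 ^ 2 + t.2 ^ 2) ^ ν * Theta n t ^ (2 * r) ≤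
      C * ((n : ℝ) + 1) ^ (6 * r - 2) / ((n : ℝ) + 1) ^ ν := by
  set w : ℝ → ℝ := fun y => ((1 + |y|) ^ (2 * r - ν))⁻¹
  have hw : Integrable w := integrable_inv_one_add_abs_pow (by omega)
  have hw_pos : 0 < ∫ y, w y := integral_inv_one_add_abs_pow_pos (by omega)
  refine ⟨36 ^ (2 * r) * (∫ y, w y) ^ 2 / 3, by positivity, fun n => ?_⟩
  set N : ℝ := n + 1
  have hN : 0 < N := by positivity
  set K := 36 ^ (2 * r) * N ^ (6 * r) / N ^ ν
  have hG := (integrable_mul_comp_rootCoords hw hw hN.ne').const_mul K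
  calc ∫ t in Hex, √(t.1 ^ 2 + t.2 ^ 2) ^ ν * Theta n t ^ (2 * r)
      ≤ ∫ t in Hex, K * (w (N * (t.1 - t.2)) * w (N * (t.1 + 2 * t.2))) := by
        refine integral_mono_of_nonneg (Eventually.of_forall fun t => ?_) hG.integrableOn ?_
        · exact mul_nonneg (by positivity) ((even_two_mul r).pow_nonneg _)
        · filter_upwards [ae_restrict_mem measurableSet_Hex] with t ht
          exact sqrt_pow_mul_Theta_pow_le n (by omega) ht
    _ ≤ ∫ t : ℝ × ℝ, K * (w (N * (t.1 - t.2)) * w (N * (t.1 + 2 * t.2))) :=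
        setIntegral_le_integral hG (Eventually.of_forall fun t => by simp only [K, w]; positivity)
    _ = _ := by
        rw [integral_const_mul, integral_mul_comp_rootCoords hw hw hN,
          pow_sub₀ _ hN.ne' (by omega)]
        simp only [K]
        field_simp

end HexJackson

open HexJackson

/-- for `r ≥ 1` and `0 ≤ ν ≤ 2r-2`, one has
`∫_Ω Θ_n^{2r} ≍ n^{6r-2}` and `∫_Ω ‖t‖^ν K_{n,r}(t) dt ≤ c n^{-ν}`,
with constants depending only on `r` (and `ν`). -/
theorem stmt12 (r : ℕ) (hr : 1 ≤ r) (ν : ℕ) (hν : ν ≤ 2 * r - 2) :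
    (∃ c₁ c₂ : ℝ, 0 < c₁ ∧ 0 < c₂ ∧ ∀ n : ℕ, 1 ≤ n →
      c₁ * (n : ℝ) ^ (6 * r - 2) ≤ (∫ t in Hex, Theta n t ^ (2 * r)) ∧
      (∫ t in Hex, Theta n t ^ (2 * r)) ≤ c₂ * (n : ℝ) ^ (6 * r - 2)) ∧
    (∃ c : ℝ, 0 < c ∧ ∀ n : ℕ, 1 ≤ n →
      (∫ t in Hex, Real.sqrt (t.1 ^ 2 + t.2 ^ 2) ^ ν * JacksonKer n r t) ≤
        c / (n : ℝ) ^ ν) := by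
  obtain ⟨C₀, hC₀, hI_le⟩ :=
    exists_integral_Hex_sqrt_pow_mul_Theta_pow_le (r := r) (ν := 0) (by omega)
  obtain ⟨C, hC, hJ_le⟩ :=
    exists_integral_Hex_sqrt_pow_mul_Theta_pow_le (r := r) (ν := ν) (by omega)
  simp only [pow_zero, one_mul, div_one] at hI_le
  set c := (2 / Real.pi) ^ (6 * r) / 16
  have hc : 0 < c := by positivity
  refine ⟨⟨c, C₀ * 2 ^ (6 * r - 2), hc, by positivity, fun n hn => ⟨?_, ?_⟩⟩,
    ⟨C / c, by positivity, fun n hn => ?_⟩⟩ <;> have hn' : (1 : ℝ) ≤ n := by exact_mod_cast hn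
  · calc c * (n : ℝ) ^ (6 * r - 2) ≤ c * ((n : ℝ) + 1) ^ (6 * r - 2) := by gcongr; linarith
      _ ≤ _ := le_integral_Theta_pow n hr
  · calc _ ≤ C₀ * ((n : ℝ) + 1) ^ (6 * r - 2) := hI_le n
      _ ≤ C₀ * (2 * n) ^ (6 * r - 2) := by gcongr; linarith
      _ = _ := by ring
  · calc ∫ t in Hex, Real.sqrt (t.1 ^ 2 + t.2 ^ 2) ^ ν * JacksonKer n r t
        = (∫ t in Hex, Real.sqrt (t.1 ^ 2 + t.2 ^ 2) ^ ν * Theta n t ^ (2 * r)) /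
            ∫ t in Hex, Theta n t ^ (2 * r) := by
          simp_rw [JacksonKer, mul_div_assoc']; exact integral_div _ _
      _ ≤ (C * ((n : ℝ) + 1) ^ (6 * r - 2) / ((n : ℝ) + 1) ^ ν) /
            (c * ((n : ℝ) + 1) ^ (6 * r - 2)) :=
          div_le_div₀ (by positivity) (hJ_le n) (by positivity) (le_integral_Theta_pow n hr)
      _ = C / c / ((n : ℝ) + 1) ^ ν := by field_simp
      _ ≤ C / c / (n : ℝ) ^ ν := by gcongr; linarith
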